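/- (Locality Radford theorem) Let (X,≤) be a well-ordered set equipped with a locality relation ⊤ and let k be a ℚ-algebra. The set Lyn_⊤(X) of locality Lyndon words on X is a locality algebraically independent generating set of the locality shuffle algebra Sh_⊤(kX); thus Sh_⊤(kX) is a locality polynomial algebra generated by Lyn_⊤(X). -/

import Mathlib

/-!
Radford's triangularity: if `w = l₁ ⋯ lₙ` with `l₁ ≥ ⋯ ≥ lₙ` Lyndon (the Chen–Fox–Lyndon
factorization, which exists and is unique), every word of `l₁ ⧢ ⋯ ⧢ lₙ` is a rearrangement of `w`
that is lexicographically at most `w`, and `w` itself occurs a positive number of times. Over a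
`ℚ`-algebra these monomials are thus unitriangular with respect to the basis of words, which gives
independence, and spanning by induction over the finitely many rearrangements of `w`.

For the inequality, strip the first letter `a` of a shuffle: it comes from some factor `a :: w'`,
and we are done unless `a` is also the first letter of `w`. Refactor `w'` into Lyndon words, all
larger than `a :: w'`; the rest of the shuffle is a shuffle of the resulting nonincreasing list, so
by induction it is at most its concatenation. Sorting that list, `a` followed by the concatenation
is at most `w`, the decisive comparison being that for a Lyndon word `a :: z` and `p < z`, the word
`p ++ (a :: z)` is smaller than `z` without being a prefix of it.

Locality goes both ways: the factors of a locality word are pairwise related locality words, and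
for a symmetric relation every rearrangement of a locality word is again one.
-/

noncomputable section

/-- The strict lexicographic order on words induced by a strict order on letters.
A shorter word is smaller than any word extending it. -/
def wlt {X : Type*} [LT X] (w v : List X) : Prop := List.Lex (· < ·) w v

/-- A Lyndon word: a nonempty word that is lexicographically (strictly) smaller than all of
its proper suffixes. -/
def IsLyndon {X : Type*} [LT X] (w : List X) : Prop :=
  w ≠ [] ∧ ∀ u v : List X, u ≠ [] → v ≠ [] → w = u ++ v → wlt w v

/-- A locality word for the locality relation `t`: a word whose letters are pairwise
`t`-related. -/
def LocWord {X : Type*} (t : X → X → Prop) (w : List X) : Prop := w.Pairwise t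

/-- Two words are `t`-related if each letter of the first is `t`-related to each letter of
the second. -/
def WordRel {X : Type*} (t : X → X → Prop) (w v : List X) : Prop :=
  ∀ a ∈ w, ∀ b ∈ v, t a b

/-- The multiset of shuffles of two words. -/
def shuffles {X : Type*} : List X → List X → Multiset (List X)
  | [], v => {v}
  | a :: w, [] => {a :: w}
  | a :: w, b :: v =>
      ((shuffles w (b :: v)).map (a :: ·)) + ((shuffles (a :: w) v).map (b :: ·))
  termination_by w v => w.length + v.length

variable (k : Type*) [CommRing k]

/-- The shuffle product on the free module on words. -/
def shMul {X : Type*} (f g : List X →₀ k) : List X →₀ k :=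
  f.sum fun w c => g.sum fun v d =>
    ((shuffles w v).map fun u => Finsupp.single u (c * d)).sum

/-- The shuffle-product monomial associated to a list of words. -/
def shProd {X : Type*} (l : List (List X)) : List X →₀ k :=
  l.foldr (fun w acc => shMul k (Finsupp.single w 1) acc) (Finsupp.single [] 1)

section Lyndon

variable {X : Type*} [LinearOrder X]

theorem isPrefix_or_append_lt_append_of_lt {u v : List X} (h : u < v) :
    u <+: v ∨ ∀ A B : List X, u ++ A < v ++ B := by
  induction h with
  | nil => exact Or.inl List.nil_prefix
  | rel hab => exact Or.inr fun _ _ => List.Lex.rel hab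
  | cons _ ih =>
    rcases ih with ⟨r, rfl⟩ | h
    · exact Or.inl ⟨r, rfl⟩
    · exact Or.inr fun A B => List.Lex.cons (h A B)

theorem append_lt_append_of_lt_of_length_le {u v : List X} (h : u < v)
    (hlen : v.length ≤ u.length) (A B : List X) : u ++ A < v ++ B := by
  refine ((isPrefix_or_append_lt_append_of_lt h).resolve_left fun hpre => ?_) A B
  exact (h.ne (hpre.eq_of_length (le_antisymm hpre.length_le hlen))).elim

theorem le_self_append (u v : List X) : u ≤ u ++ v :=
  not_lt.1 List.le_append_left

theorem IsLyndon.ne_nil {w : List X} (h : IsLyndon w) : w ≠ [] := h.1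

theorem IsLyndon.lt_of_append_eq {w u v : List X} (h : IsLyndon w) (hu : u ≠ []) (hv : v ≠ [])
    (huv : w = u ++ v) : w < v :=
  h.2 u v hu hv huv

theorem IsLyndon.le_of_isSuffix {w s : List X} (h : IsLyndon w) (hs : s ≠ []) (hsw : s <:+ w) :
    w ≤ s := by
  obtain ⟨p, rfl⟩ := hsw
  rcases eq_or_ne p [] with rfl | hp
  · exact le_rfl
  · exact (h.lt_of_append_eq hp hs rfl).le

theorem isLyndon_singleton (a : X) : IsLyndon [a] := by
  refine ⟨List.cons_ne_nil a [], fun u v hu hv huv => ?_⟩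
  rcases List.append_eq_singleton_iff.1 huv.symm with ⟨rfl, -⟩ | ⟨-, rfl⟩
  exacts [(hu rfl).elim, (hv rfl).elim]

theorem IsLyndon.append_lt_of_lt {u v : List X} (hv : IsLyndon v) (huv : u < v) (hu : u ≠ []) :
    u ++ v < v := by
  rcases isPrefix_or_append_lt_append_of_lt huv with ⟨z, rfl⟩ | h
  · have hz : z ≠ [] := by rintro rfl; simp at huv
    exact List.append_left_lt (hv.lt_of_append_eq hu hz rfl)
  · simpa using h v []

theorem IsLyndon.append {u v : List X} (hu : IsLyndon u) (hv : IsLyndon v) (huv : u < v) :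
    IsLyndon (u ++ v) := by
  have huvv : u ++ v < v := hv.append_lt_of_lt huv hu.ne_nil
  refine ⟨by simp [hu.ne_nil], fun p s hp hs hps => ?_⟩
  show u ++ v < s
  rcases List.append_eq_append_iff.1 hps with ⟨r, rfl, rfl⟩ | ⟨q, rfl, rfl⟩
  · rcases eq_or_ne r [] with rfl | hr
    · simpa using huvv
    · exact huvv.trans (hv.lt_of_append_eq hr hs rfl)
  · rcases eq_or_ne q [] with rfl | hq
    · simpa using huvv
    · refine append_lt_append_of_lt_of_length_le (hu.lt_of_append_eq hp hq rfl) ?_ v v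
      simp

def IsLyndonFactorization (L : List (List X)) : Prop :=
  (∀ u ∈ L, IsLyndon u) ∧ L.Pairwise (· ≥ ·)

theorem isLyndonFactorization_nil : IsLyndonFactorization ([] : List (List X)) :=
  ⟨by simp, .nil⟩

theorem isLyndonFactorization_cons {u : List X} {L : List (List X)} :
    IsLyndonFactorization (u :: L) ↔
      IsLyndon u ∧ (∀ v ∈ L, v ≤ u) ∧ IsLyndonFactorization L := by
  simp only [IsLyndonFactorization, List.mem_cons, forall_eq_or_imp, List.pairwise_cons, ge_iff_le]
  tauto

theorem IsLyndonFactorization.sublist {L M : List (List X)} (hM : IsLyndonFactorization M)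
    (h : L.Sublist M) : IsLyndonFactorization L :=
  ⟨fun u hu => hM.1 u (h.subset hu), hM.2.sublist h⟩

theorem IsLyndonFactorization.exists_flatten_eq_append {u : List X} (hu : IsLyndon u)
    {L : List (List X)} (hL : IsLyndonFactorization L) :
    ∃ M, IsLyndonFactorization M ∧ M.flatten = u ++ L.flatten := by
  induction L generalizing u with
  | nil => exact ⟨[u], isLyndonFactorization_cons.2 ⟨hu, by simp, hL⟩, by simp⟩
  | cons v L ih =>
    obtain ⟨hv, hvL, hL'⟩ := isLyndonFactorization_cons.1 hL
    rcases le_or_gt v u with hvu | huv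
    · refine ⟨u :: v :: L, isLyndonFactorization_cons.2 ⟨hu, ?_, hL⟩, rfl⟩
      simpa using ⟨hvu, fun w hw => (hvL w hw).trans hvu⟩
    · obtain ⟨M, hM, hMf⟩ := ih (hu.append hv huv) hL'
      exact ⟨M, hM, by simp [hMf]⟩

theorem exists_isLyndonFactorization (w : List X) :
    ∃ L, IsLyndonFactorization L ∧ L.flatten = w := by
  induction w with
  | nil => exact ⟨[], isLyndonFactorization_nil, rfl⟩
  | cons a w ih =>
    obtain ⟨L, hL, rfl⟩ := ih
    exact hL.exists_flatten_eq_append (isLyndon_singleton a)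

theorem IsLyndonFactorization.le_of_isSuffix {L : List (List X)} {u s : List X}
    (h : IsLyndonFactorization (L ++ [u])) (hs : s ≠ []) (hsuf : s <:+ (L ++ [u]).flatten) :
    u ≤ s := by
  induction L generalizing s with
  | nil => exact (h.1 u (by simp)).le_of_isSuffix hs (by simpa using hsuf)
  | cons v L ih =>
    obtain ⟨hv, hvL, hL⟩ := isLyndonFactorization_cons.1 h
    obtain ⟨p, hp⟩ := hsuf
    rw [List.cons_append, List.flatten_cons] at hp
    rcases List.append_eq_append_iff.1 hp with ⟨q, hvq, rfl⟩ | ⟨r, rfl, hr⟩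
    · rcases eq_or_ne q [] with rfl | hq
      · exact ih hL hs (by simp)
      calc u ≤ v := hvL u (by simp)
        _ ≤ q := hv.le_of_isSuffix hq ⟨p, hvq.symm⟩
        _ ≤ q ++ (L ++ [u]).flatten := le_self_append _ _
    · exact ih hL hs ⟨r, hr.symm⟩

theorem IsLyndonFactorization.eq_nil_of_flatten_eq_nil {L : List (List X)}
    (h : IsLyndonFactorization L) (h0 : L.flatten = []) : L = [] :=
  List.eq_nil_iff_forall_not_mem.2 fun u hu => (h.1 u hu).ne_nil (List.flatten_eq_nil_iff.1 h0 u hu)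

theorem IsLyndonFactorization.eq_of_flatten_eq {L M : List (List X)}
    (hL : IsLyndonFactorization L) (hM : IsLyndonFactorization M) (h : L.flatten = M.flatten) :
    L = M := by
  induction L using List.reverseRecOn generalizing M with
  | nil => exact (hM.eq_nil_of_flatten_eq_nil (by simpa using h.symm)).symm
  | append_singleton L u ih =>
    rcases M.eq_nil_or_concat with rfl | ⟨M, v, rfl⟩
    · simpa using hL.eq_nil_of_flatten_eq_nil h
    rw [List.concat_eq_append] at hM h ⊢
    have huv : u = v := le_antisymm
      (hL.le_of_isSuffix (hM.1 v (by simp)).ne_nil (by rw [h]; simp [List.flatten_append]))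
      (hM.le_of_isSuffix (hL.1 u (by simp)).ne_nil (by rw [← h]; simp [List.flatten_append]))
    subst huv
    rw [ih (hL.sublist (List.sublist_append_left _ _)) (hM.sublist (List.sublist_append_left _ _))
      (by simpa using h)]

end Lyndon

section Shuffles

variable {X : Type*}

@[simp] theorem shuffles_nil_left (v : List X) : shuffles [] v = {v} := by
  rw [shuffles]

@[simp] theorem shuffles_nil_right (u : List X) : shuffles u [] = {u} := by
  cases u <;> rw [shuffles]

theorem shuffles_cons_cons (a b : X) (w v : List X) :
    shuffles (a :: w) (b :: v) =
      (shuffles w (b :: v)).map (a :: ·) + (shuffles (a :: w) v).map (b :: ·) := by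
  rw [shuffles]

theorem nil_mem_shuffles_iff {u v : List X} : [] ∈ shuffles u v ↔ u = [] ∧ v = [] := by
  match u, v with
  | [], v => simp [eq_comm]
  | a :: w, [] => simp
  | a :: w, b :: v => simp [shuffles_cons_cons]

theorem cons_mem_shuffles_iff {c : X} {s u v : List X} :
    c :: s ∈ shuffles u v ↔
      (∃ u', u = c :: u' ∧ s ∈ shuffles u' v) ∨ (∃ v', v = c :: v' ∧ s ∈ shuffles u v') := by
  match u, v with
  | [], v => simp [eq_comm]
  | a :: w, [] => simp [eq_comm]
  | a :: w, b :: v => simp [shuffles_cons_cons, and_comm, eq_comm]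

theorem append_mem_shuffles (u v : List X) : u ++ v ∈ shuffles u v := by
  induction u with
  | nil => simp
  | cons a u ih => exact cons_mem_shuffles_iff.2 (.inl ⟨u, rfl, ih⟩)

theorem perm_append_of_mem_shuffles {s u v : List X} (h : s ∈ shuffles u v) : s.Perm (u ++ v) := by
  induction s generalizing u v with
  | nil => simp [(nil_mem_shuffles_iff.1 h).1, (nil_mem_shuffles_iff.1 h).2]
  | cons c s ih =>
    rcases cons_mem_shuffles_iff.1 h with ⟨u, rfl, hs⟩ | ⟨v, rfl, hs⟩
    · exact (ih hs).cons c
    · exact ((ih hs).cons c).trans List.perm_middle.symm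

theorem mem_shuffles_comm {s u v : List X} (h : s ∈ shuffles u v) : s ∈ shuffles v u := by
  induction s generalizing u v with
  | nil => simpa [nil_mem_shuffles_iff, and_comm] using h
  | cons c s ih =>
    rcases cons_mem_shuffles_iff.1 h with ⟨u, rfl, hs⟩ | ⟨v, rfl, hs⟩
    · exact cons_mem_shuffles_iff.2 (.inr ⟨u, rfl, ih hs⟩)
    · exact cons_mem_shuffles_iff.2 (.inl ⟨v, rfl, ih hs⟩)

theorem mem_shuffles_assoc {s z u v w : List X} (hz : z ∈ shuffles u v) (hs : s ∈ shuffles z w) :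
    ∃ y ∈ shuffles v w, s ∈ shuffles u y := by
  induction s generalizing z u v w with
  | nil =>
    obtain ⟨rfl, rfl⟩ := nil_mem_shuffles_iff.1 hs
    obtain ⟨rfl, rfl⟩ := nil_mem_shuffles_iff.1 hz
    exact ⟨[], by simp, by simp⟩
  | cons c s ih =>
    rcases cons_mem_shuffles_iff.1 hs with ⟨z, rfl, hs'⟩ | ⟨w, rfl, hs'⟩
    · rcases cons_mem_shuffles_iff.1 hz with ⟨u, rfl, hz'⟩ | ⟨v, rfl, hz'⟩
      · obtain ⟨y, hy, hsy⟩ := ih hz' hs'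
        exact ⟨y, hy, cons_mem_shuffles_iff.2 (.inl ⟨u, rfl, hsy⟩)⟩
      · obtain ⟨y, hy, hsy⟩ := ih hz' hs'
        exact ⟨c :: y, cons_mem_shuffles_iff.2 (.inl ⟨v, rfl, hy⟩),
          cons_mem_shuffles_iff.2 (.inr ⟨y, rfl, hsy⟩)⟩
    · obtain ⟨y, hy, hsy⟩ := ih hz hs'
      exact ⟨c :: y, cons_mem_shuffles_iff.2 (.inr ⟨w, rfl, hy⟩),
        cons_mem_shuffles_iff.2 (.inr ⟨y, rfl, hsy⟩)⟩

theorem mem_shuffles_left_comm {s m x y t : List X} (hm : m ∈ shuffles y t)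
    (hs : s ∈ shuffles x m) : ∃ m' ∈ shuffles x t, s ∈ shuffles y m' := by
  obtain ⟨m', hm', hsm'⟩ := mem_shuffles_assoc hm (mem_shuffles_comm hs)
  exact ⟨m', mem_shuffles_comm hm', hsm'⟩

/-- The multiset of words of the shuffle product `l₁ ⧢ ⋯ ⧢ lₙ`, with multiplicities. -/
def iterShuffles : List (List X) → Multiset (List X)
  | [] => {[]}
  | w :: L => (iterShuffles L).bind (shuffles w)

@[simp] theorem iterShuffles_nil : iterShuffles ([] : List (List X)) = {[]} := rfl

theorem mem_iterShuffles_cons {w s : List X} {L : List (List X)} :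
    s ∈ iterShuffles (w :: L) ↔ ∃ m ∈ iterShuffles L, s ∈ shuffles w m := by
  simp [iterShuffles, Multiset.mem_bind]

theorem flatten_mem_iterShuffles (L : List (List X)) : L.flatten ∈ iterShuffles L := by
  induction L with
  | nil => simp
  | cons w L ih => exact mem_iterShuffles_cons.2 ⟨_, ih, append_mem_shuffles _ _⟩

theorem perm_flatten_of_mem_iterShuffles {L : List (List X)} {s : List X}
    (h : s ∈ iterShuffles L) : s.Perm L.flatten := by
  induction L generalizing s with
  | nil => simp_all
  | cons w L ih =>
    obtain ⟨m, hm, hs⟩ := mem_iterShuffles_cons.1 h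
    exact (perm_append_of_mem_shuffles hs).trans ((ih hm).append_left w)

theorem mem_iterShuffles_append {F K : List (List X)} {m k s : List X}
    (hm : m ∈ iterShuffles F) (hk : k ∈ iterShuffles K) (hs : s ∈ shuffles m k) :
    s ∈ iterShuffles (F ++ K) := by
  induction F generalizing m s with
  | nil =>
    obtain rfl : m = [] := by simpa using hm
    obtain rfl : s = k := by simpa using hs
    simpa using hk
  | cons f F ih =>
    obtain ⟨m', hm', hmf⟩ := mem_iterShuffles_cons.1 hm
    obtain ⟨y, hy, hsy⟩ := mem_shuffles_assoc hmf hs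
    exact mem_iterShuffles_cons.2 ⟨y, ih hm' hy, hsy⟩

theorem List.Perm.mem_iterShuffles {L L' : List (List X)} (hLL' : L.Perm L') {s : List X}
    (hs : s ∈ iterShuffles L) : s ∈ iterShuffles L' := by
  induction hLL' generalizing s with
  | nil => exact hs
  | cons w _ ih =>
    obtain ⟨m, hm, hsm⟩ := mem_iterShuffles_cons.1 hs
    exact mem_iterShuffles_cons.2 ⟨m, ih hm, hsm⟩
  | swap x y T =>
    obtain ⟨m, hm, hsm⟩ := mem_iterShuffles_cons.1 hs
    obtain ⟨t, ht, hmt⟩ := mem_iterShuffles_cons.1 hm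
    obtain ⟨m', hm', hsm'⟩ := mem_shuffles_left_comm hmt hsm
    exact mem_iterShuffles_cons.2 ⟨m', mem_iterShuffles_cons.2 ⟨t, ht, hm'⟩, hsm'⟩
  | trans _ _ ih₁ ih₂ => exact ih₂ (ih₁ hs)

theorem exists_perm_of_cons_mem_iterShuffles {L : List (List X)} {c : X} {s : List X}
    (h : c :: s ∈ iterShuffles L) :
    ∃ w K, L.Perm ((c :: w) :: K) ∧ s ∈ iterShuffles (w :: K) := by
  induction L generalizing s with
  | nil => simp at h
  | cons u L ih =>
    obtain ⟨m, hm, hs⟩ := mem_iterShuffles_cons.1 h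
    rcases cons_mem_shuffles_iff.1 hs with ⟨w, rfl, hs'⟩ | ⟨m, rfl, hs'⟩
    · exact ⟨w, L, .refl _, mem_iterShuffles_cons.2 ⟨m, hm, hs'⟩⟩
    · obtain ⟨w, K, hL, hm'⟩ := ih hm
      refine ⟨w, u :: K, (hL.cons u).trans (.swap _ _ _), ?_⟩
      exact (List.Perm.swap _ _ _).mem_iterShuffles (mem_iterShuffles_cons.2 ⟨m, hm', hs'⟩)

theorem LocWord.of_perm {t : X → X → Prop} (hsymm : ∀ a b, t a b → t b a) {u w : List X}
    (hw : LocWord t w) (hp : u.Perm w) : LocWord t u :=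
  (hp.pairwise_iff fun h => hsymm _ _ h).2 hw

end Shuffles

section Triangularity

variable {X : Type*} [LinearOrder X]

theorem exists_append_of_pairwise_ge {α : Type*} [LinearOrder α] {F : List α}
    (hF : F.Pairwise (· ≥ ·)) (m : α) :
    ∃ Fp Fm, F = Fp ++ Fm ∧ (∀ f ∈ Fp, m < f) ∧ ∀ f ∈ Fm, f ≤ m := by
  induction F with
  | nil => exact ⟨[], [], rfl, by simp, by simp⟩
  | cons f F ih =>
    obtain ⟨hfF, hF⟩ := List.pairwise_cons.1 hF
    rcases lt_or_ge m f with hmf | hfm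
    · obtain ⟨Fp, Fm, rfl, hFp, hFm⟩ := ih hF
      exact ⟨f :: Fp, Fm, rfl, List.forall_mem_cons.2 ⟨hmf, hFp⟩, hFm⟩
    · exact ⟨[], f :: F, rfl, by simp,
        List.forall_mem_cons.2 ⟨hfm, fun g hg => (hfF g hg).trans hfm⟩⟩

theorem exists_perm_pairwise_ge {α : Type*} [LinearOrder α] (K : List α) :
    ∃ N : List α, N.Perm K ∧ N.Pairwise (· ≥ ·) :=
  ⟨K.mergeSort (fun a b => decide (a ≥ b)), List.mergeSort_perm _ _, List.pairwise_mergeSort' _ _⟩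

theorem IsLyndonFactorization.le_of_mem_cons {u x : List X} {L : List (List X)}
    (h : IsLyndonFactorization (u :: L)) (hx : x ∈ u :: L) : x ≤ u := by
  rcases List.mem_cons.1 hx with rfl | hx
  exacts [le_rfl, (isLyndonFactorization_cons.1 h).2.1 x hx]

theorem IsLyndon.lt_of_mem_factorization_tail {a : X} {w : List X} {F : List (List X)}
    (hl : IsLyndon (a :: w)) (hF : IsLyndonFactorization F) (hFw : F.flatten = w) :
    ∀ f ∈ F, a :: w < f := by
  intro f hf
  obtain ⟨F, u, rfl⟩ := (List.eq_nil_or_concat F).resolve_left (List.ne_nil_of_mem hf)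
  rw [List.concat_eq_append] at hf hF hFw
  obtain ⟨p, hp⟩ : u <:+ w := hFw ▸ by simp [List.flatten_append]
  have hu : a :: w < u := hl.lt_of_append_eq (u := a :: p) (by simp) (hF.1 u (by simp)).ne_nil
    (by simp [hp])
  rcases List.mem_append.1 hf with hf | hf
  · exact hu.trans_le ((List.pairwise_append.1 hF.2).2.2 f hf u (by simp))
  · simp_all

theorem IsLyndon.append_append_lt {a : X} {z p : List X} (hM : IsLyndon (a :: z)) (hp : p < z)
    (Q R : List X) : p ++ (a :: z) ++ Q < z ++ R := by
  rcases isPrefix_or_append_lt_append_of_lt hp with ⟨z₁, rfl⟩ | h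
  · have hz₁ : z₁ ≠ [] := by rintro rfl; simp at hp
    have hlt : a :: (p ++ z₁) < z₁ := hM.lt_of_append_eq (u := a :: p) (by simp) hz₁ rfl
    have := append_lt_append_of_lt_of_length_le hlt (by simp; omega) Q R
    simpa [List.append_assoc] using List.append_left_lt (l₁ := p) this
  · simpa [List.append_assoc] using h ((a :: z) ++ Q) R

theorem IsLyndonFactorization.cons_flatten_eq_of_perm {a : X} {w : List X}
    {L' K F N : List (List X)} (hL : IsLyndonFactorization ((a :: w) :: L')) (hK : L'.Perm K)
    (hF : IsLyndonFactorization F) (hFw : F.flatten = w)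
    (hN : N.Perm (F ++ K)) (hNs : N.Pairwise (· ≥ ·)) :
    a :: N.flatten = ((a :: w) :: L').flatten := by
  obtain ⟨hl, hL'le, hL'⟩ := isLyndonFactorization_cons.1 hL
  have hFl := hl.lt_of_mem_factorization_tail hF hFw
  have hsorted : (F ++ L').Pairwise (· ≥ ·) := List.pairwise_append.2
    ⟨hF.2, hL'.2, fun f hf x hx => (hL'le x hx).trans (hFl f hf).le⟩
  rw [List.Perm.eq_of_pairwise' hNs hsorted (hN.trans (hK.symm.append_left F))]
  simp [hFw]

theorem IsLyndonFactorization.cons_flatten_lt_of_perm {a : X} {m w : List X}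
    {L' K F N : List (List X)} (hL : IsLyndonFactorization ((a :: m) :: L'))
    (hperm : ((a :: m) :: L').Perm ((a :: w) :: K)) (hlt : a :: w < a :: m)
    (hF : IsLyndonFactorization F) (hFw : F.flatten = w)
    (hN : N.Perm (F ++ K)) (hNs : N.Pairwise (· ≥ ·)) :
    a :: N.flatten < ((a :: m) :: L').flatten := by
  have hKle : ∀ x ∈ K, x ≤ a :: m := fun x hx =>
    hL.le_of_mem_cons (hperm.symm.subset (List.mem_cons_of_mem _ hx))
  have hMK : a :: m ∈ K := by
    rcases List.mem_cons.1 (hperm.subset (List.mem_cons_self (a := a :: m))) with h | h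
    exacts [(hlt.ne h.symm).elim, h]
  -- `N` is `Fp ++ (a :: m) :: N'`, where `Fp` are the factors of `w` above `a :: m`.
  obtain ⟨Fp, Fm, rfl, hFp, hFm⟩ := exists_append_of_pairwise_ge hF.2 (a :: m)
  obtain ⟨N', hN', hN's⟩ := exists_perm_pairwise_ge (Fm ++ K.erase (a :: m))
  have hN'le : ∀ x ∈ (a :: m) :: N', x ≤ a :: m := List.forall_mem_cons.2 ⟨le_rfl, fun x hx => by
    rcases List.mem_append.1 (hN'.subset hx) with hx | hx
    exacts [hFm x hx, hKle x (List.mem_of_mem_erase hx)]⟩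
  have hsorted : (Fp ++ (a :: m) :: N').Pairwise (· ≥ ·) := List.pairwise_append.2
    ⟨(hF.sublist (List.sublist_append_left _ _)).2,
      List.pairwise_cons.2 ⟨fun x hx => hN'le x (List.mem_cons_of_mem _ hx), hN's⟩,
      fun f hf x hx => (hN'le x hx).trans (hFp f hf).le⟩
  have hperm' : N.Perm (Fp ++ (a :: m) :: N') := by
    refine hN.trans ?_
    rw [List.append_assoc]
    refine List.Perm.append_left Fp (((List.perm_cons_erase hMK).append_left Fm).trans ?_)
    exact List.perm_middle.trans (hN'.symm.cons _)
  have hp : Fp.flatten < m := (le_self_append _ _).trans_lt (by simpa [← hFw] using hlt)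
  rw [List.Perm.eq_of_pairwise' hNs hsorted hperm']
  simpa using (isLyndonFactorization_cons.1 hL).1.append_append_lt hp N'.flatten L'.flatten

theorem IsLyndonFactorization.cons_flatten_le_of_perm {a : X} {m w : List X}
    {L' K F N : List (List X)} (hL : IsLyndonFactorization ((a :: m) :: L'))
    (hperm : ((a :: m) :: L').Perm ((a :: w) :: K))
    (hF : IsLyndonFactorization F) (hFw : F.flatten = w)
    (hN : N.Perm (F ++ K)) (hNs : N.Pairwise (· ≥ ·)) :
    a :: N.flatten ≤ ((a :: m) :: L').flatten := by
  rcases (hL.le_of_mem_cons (hperm.symm.subset List.mem_cons_self)).eq_or_lt with heq | hlt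
  · obtain rfl : w = m := (List.cons.inj heq).2
    exact (hL.cons_flatten_eq_of_perm hperm.cons_inv hF hFw hN hNs).le
  · exact (hL.cons_flatten_lt_of_perm hperm hlt hF hFw hN hNs).le

theorem IsLyndonFactorization.le_flatten_of_mem_iterShuffles {L : List (List X)}
    (hL : IsLyndonFactorization L) {s : List X} (hs : s ∈ iterShuffles L) : s ≤ L.flatten := by
  induction s generalizing L with
  | nil => exact not_lt.1 (List.not_lt_nil _)
  | cons c s ih =>
    obtain ⟨w, K, hLK, hs'⟩ := exists_perm_of_cons_mem_iterShuffles hs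
    obtain ⟨M, L', rfl⟩ :=
      List.exists_cons_of_ne_nil (List.ne_nil_of_mem (hLK.symm.subset List.mem_cons_self))
    obtain ⟨b, m, rfl⟩ := List.exists_cons_of_ne_nil (hL.1 M List.mem_cons_self).ne_nil
    have hcb : c ≤ b := List.left_le_left_of_cons_le_cons
      (not_lt.2 (hL.le_of_mem_cons (hLK.symm.subset List.mem_cons_self)))
    rcases hcb.lt_or_eq with hcb | rfl
    · exact le_of_lt (List.Lex.rel hcb)
    obtain ⟨F, hF, hFw⟩ := exists_isLyndonFactorization w
    obtain ⟨N, hN, hNs⟩ := exists_perm_pairwise_ge (F ++ K)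
    have hNL : IsLyndonFactorization N := by
      refine ⟨fun x hx => ?_, hNs⟩
      rcases List.mem_append.1 (hN.subset hx) with hx | hx
      exacts [hF.1 x hx, hL.1 x (hLK.symm.subset (List.mem_cons_of_mem _ hx))]
    obtain ⟨k, hk, hsk⟩ := mem_iterShuffles_cons.1 hs'
    have hsN : s ∈ iterShuffles N := hN.symm.mem_iterShuffles
      (mem_iterShuffles_append (hFw ▸ flatten_mem_iterShuffles F) hk hsk)
    calc c :: s ≤ c :: N.flatten := List.cons_le_cons c (ih hNL hsN)
      _ ≤ _ := hL.cons_flatten_le_of_perm hLK hF hFw hN hNs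

end Triangularity

section Algebra

variable {X : Type*}

def wordSum (M : Multiset (List X)) : List X →₀ k :=
  (M.map fun u => Finsupp.single u 1).sum

theorem wordSum_apply [DecidableEq X] (M : Multiset (List X)) (w : List X) :
    wordSum k M w = M.count w := by
  induction M using Multiset.induction with
  | empty => simp [wordSum]
  | cons u M ih =>
    rw [wordSum, Multiset.map_cons, Multiset.sum_cons, Finsupp.add_apply, ← wordSum, ih,
      Multiset.count_cons, Finsupp.single_apply]
    rcases eq_or_ne u w with rfl | h
    · simp [add_comm]
    · simp [h, h.symm]

theorem wordSum_eq_count_smul_add [DecidableEq X] (M : Multiset (List X)) (w : List X) :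
    wordSum k M = (M.count w : k) • Finsupp.single w 1 + wordSum k (M.filter (· ≠ w)) := by
  conv_lhs => rw [← Multiset.filter_add_not (· = w) M]
  rw [wordSum, Multiset.map_add, Multiset.sum_add, Multiset.filter_eq', Multiset.map_replicate,
    Multiset.sum_replicate, ← Nat.cast_smul_eq_nsmul k, wordSum]

theorem shMul_single_wordSum (w : List X) (M : Multiset (List X)) :
    shMul k (Finsupp.single w 1) (wordSum k M) = wordSum k (M.bind (shuffles w)) := by
  rw [shMul, Finsupp.sum_single_index (by simp), wordSum, Finsupp.multiset_sum_sum_index _ _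
    (by simp) (by simp [Finsupp.single_add, Multiset.sum_map_add]), wordSum, Multiset.map_bind,
    Multiset.sum_bind, Multiset.map_map]
  congr 1
  refine Multiset.map_congr rfl fun u _ => ?_
  simp [Finsupp.sum_single_index]

theorem shProd_eq_wordSum (L : List (List X)) : shProd k L = wordSum k (iterShuffles L) := by
  induction L with
  | nil => simp [shProd, wordSum]
  | cons w L ih =>
    change shMul k (Finsupp.single w 1) (shProd k L) = _
    rw [ih, shMul_single_wordSum]
    rfl

end Algebra

section Radford

variable {X : Type*} [LinearOrder X]

theorem linearIndependent_of_leading {ι σ R : Type*} [CommRing R] [LinearOrder σ]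
    (v : ι → σ →₀ R) (lead : ι → σ) (hlead : Function.Injective lead)
    (hunit : ∀ i, IsUnit (v i (lead i))) (hle : ∀ i s, v i s ≠ 0 → s ≤ lead i) :
    LinearIndependent R v := by
  classical
  rw [linearIndependent_iff]
  intro c hc
  by_contra hc0
  obtain ⟨i, hi, hmax⟩ :=
    Finset.exists_max_image c.support lead (Finsupp.support_nonempty_iff.2 hc0)
  have hcoef : Finsupp.linearCombination R v c (lead i) = c i * v i (lead i) := by
    rw [Finsupp.linearCombination_apply, Finsupp.sum_apply, Finsupp.sum_eq_single i]
    · simp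
    · intro j hj hji
      have : v j (lead i) = 0 := by
        by_contra h
        exact hji (hlead (le_antisymm (hmax j (Finsupp.mem_support_iff.2 hj)) (hle j _ h)))
      simp [this]
    · simp
  rw [hc, Finsupp.zero_apply, eq_comm, (hunit i).mul_left_eq_zero] at hcoef
  exact Finsupp.mem_support_iff.1 hi hcoef

theorem isUnit_natCast_of_ne_zero {R : Type*} [CommRing R] [Algebra ℚ R] {n : ℕ} (hn : n ≠ 0) :
    IsUnit (n : R) := by
  simpa using (IsUnit.mk0 (n : ℚ) (Nat.cast_ne_zero.2 hn)).map (algebraMap ℚ R)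

/-- Rearrangements of a word are finitely many, so `<` is well founded among them. -/
theorem wellFounded_perm_lt : WellFounded fun u w : List X => u.Perm w ∧ u < w := by
  classical
  refine Subrelation.wf
    (r := InvImage (· < ·) fun w => (w.permutations.toFinset.filter (· < w)).card) ?_
    (InvImage.wf _ wellFounded_lt)
  rintro u w ⟨hp, hlt⟩
  refine Finset.card_lt_card ((Finset.ssubset_iff_of_subset fun x => ?_).2 ⟨u, ?_, ?_⟩)
  · simp only [Finset.mem_filter, List.mem_toFinset, List.mem_permutations]
    exact fun ⟨hx, hxu⟩ => ⟨hx.trans hp, hxu.trans hlt⟩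
  · simp [List.mem_permutations, hp, hlt]
  · simp

abbrev LocLyndonMonomial (t : X → X → Prop) :=
  {l : List (List X) // (∀ u ∈ l, IsLyndon u ∧ LocWord t u) ∧
    l.Pairwise (fun a b => a = b ∨ wlt b a) ∧ l.Pairwise (WordRel t)}

theorem locLyndonMonomial_iff {t : X → X → Prop} {l : List (List X)} :
    ((∀ u ∈ l, IsLyndon u ∧ LocWord t u) ∧
      l.Pairwise (fun a b => a = b ∨ wlt b a) ∧ l.Pairwise (WordRel t)) ↔
      IsLyndonFactorization l ∧ LocWord t l.flatten := by
  have hge : (fun a b : List X => a = b ∨ wlt b a) = (· ≥ ·) := by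
    ext a b
    rw [ge_iff_le, le_iff_eq_or_lt, eq_comm]
    rfl
  simp only [IsLyndonFactorization, LocWord, List.pairwise_flatten, hge]
  exact ⟨fun ⟨h₁, h₂, h₃⟩ => ⟨⟨fun u hu => (h₁ u hu).1, h₂⟩, fun u hu => (h₁ u hu).2, h₃⟩,
    fun ⟨⟨h₁, h₂⟩, h₄, h₃⟩ => ⟨fun u hu => ⟨h₁ u hu, h₄ u hu⟩, h₂, h₃⟩⟩

theorem linearIndependent_shProd [Algebra ℚ k] (t : X → X → Prop) :
    LinearIndependent k fun l : LocLyndonMonomial t => shProd k l.1 := by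
  have hfact (l : LocLyndonMonomial t) := (locLyndonMonomial_iff.1 l.2).1
  refine linearIndependent_of_leading _ (fun l => l.1.flatten)
    (fun l l' h => Subtype.ext ((hfact l).eq_of_flatten_eq (hfact l') h)) (fun l => ?_) ?_
  · rw [shProd_eq_wordSum, wordSum_apply]
    exact isUnit_natCast_of_ne_zero (Multiset.count_ne_zero.2 (flatten_mem_iterShuffles _))
  · intro l s hs
    rw [shProd_eq_wordSum, wordSum_apply] at hs
    replace hs : s ∈ iterShuffles l.1 :=
      Multiset.count_ne_zero.1 fun h0 => hs (by rw [h0, Nat.cast_zero])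
    exact (hfact l).le_flatten_of_mem_iterShuffles hs

theorem single_mem_span_shProd [Algebra ℚ k] {t : X → X → Prop} (hsymm : ∀ a b, t a b → t b a)
    {w : List X} (hw : LocWord t w) :
    Finsupp.single w 1 ∈
      Submodule.span k (Set.range fun l : LocLyndonMonomial t => shProd k l.1) := by
  set S := Submodule.span k (Set.range fun l : LocLyndonMonomial t => shProd k l.1)
  refine wellFounded_perm_lt.induction (C := fun w => LocWord t w → Finsupp.single w 1 ∈ S) w
    (fun w ih hw => ?_) hw
  obtain ⟨L, hL, rfl⟩ := exists_isLyndonFactorization w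
  have hrest : wordSum k ((iterShuffles L).filter (· ≠ L.flatten)) ∈ S := by
    refine multiset_sum_mem _ fun f hf => ?_
    obtain ⟨u, hu, rfl⟩ := Multiset.mem_map.1 hf
    obtain ⟨hu, hne⟩ := Multiset.mem_filter.1 hu
    have hp := perm_flatten_of_mem_iterShuffles hu
    exact ih u ⟨hp, (hL.le_flatten_of_mem_iterShuffles hu).lt_of_ne hne⟩ (hw.of_perm hsymm hp)
  have hL_mem : shProd k L ∈ S :=
    Submodule.subset_span ⟨⟨L, locLyndonMonomial_iff.2 ⟨hL, hw⟩⟩, rfl⟩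
  rw [shProd_eq_wordSum, wordSum_eq_count_smul_add k _ L.flatten] at hL_mem
  refine (Submodule.smul_mem_iff_of_isUnit S (isUnit_natCast_of_ne_zero ?_)).1
    ((Submodule.add_mem_iff_left S hrest).1 hL_mem)
  exact Multiset.count_ne_zero.2 (flatten_mem_iterShuffles _)

theorem shProd_mem_span_single {t : X → X → Prop} (hsymm : ∀ a b, t a b → t b a)
    (l : LocLyndonMonomial t) :
    shProd k l.1 ∈ Submodule.span k {f | ∃ w : List X, LocWord t w ∧ f = Finsupp.single w 1} := by
  have hl := (locLyndonMonomial_iff.1 l.2).2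
  rw [shProd_eq_wordSum]
  refine multiset_sum_mem _ fun f hf => ?_
  obtain ⟨u, hu, rfl⟩ := Multiset.mem_map.1 hf
  exact Submodule.subset_span ⟨u, hl.of_perm hsymm (perm_flatten_of_mem_iterShuffles hu), rfl⟩

end Radford

theorem statement14 {X : Type*} [LinearOrder X]
    (t : X → X → Prop) (hsymm : ∀ a b, t a b → t b a)
    [Algebra ℚ k] :
    LinearIndependent k
      (fun l : {l : List (List X) //
          (∀ u ∈ l, IsLyndon u ∧ LocWord t u) ∧
          l.Pairwise (fun a b => a = b ∨ wlt b a) ∧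
          l.Pairwise (WordRel t)} =>
        shProd k l.1) ∧
    Submodule.span k
      (Set.range (fun l : {l : List (List X) //
          (∀ u ∈ l, IsLyndon u ∧ LocWord t u) ∧
          l.Pairwise (fun a b => a = b ∨ wlt b a) ∧
          l.Pairwise (WordRel t)} =>
        shProd k l.1)) =
    Submodule.span k
      {f : List X →₀ k | ∃ w : List X, LocWord t w ∧ f = Finsupp.single w 1} := by
  refine ⟨linearIndependent_shProd k t, le_antisymm ?_ ?_⟩
  · exact Submodule.span_le.2 (Set.range_subset_iff.2 (shProd_mem_span_single k hsymm))
  · refine Submodule.span_le.2 ?_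
    rintro _ ⟨w, hw, rfl⟩
    exact single_mem_span_shProd k hsymm hw
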